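/- Let z ∈ Rep(Q̄,β) and w ∈ Rep(Q̄,γ) be simple points with μ_ℂ(z)_i = λ_i·Id and μ_ℂ(w)_i = λ_i·Id for all i ∈ I, for some λ ∈ ℂ^I. If z and w are not isomorphic (in particular whenever β ≠ γ), then dim_ℂ H^1_Q(z,w) = −(β,γ); and if β = γ and z, w lie in the same G_β^c-orbit, then dim_ℂ H^1_Q(z,w) = 2 − (β,β). Here (·,·) is the symmetric bilinear form of Q. -/
import Mathlib


open scoped BigOperators
set_option linter.unusedSectionVars false
open Matrix

namespace QV

variable {E I : Type}

abbrev dSrc (s t : E → I) : E ⊕ E → I := Sum.elim s t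
abbrev dTgt (s t : E → I) : E ⊕ E → I := Sum.elim t s

/-- The symmetric bilinear form of the quiver `Q`. -/
def qform [Fintype E] [Fintype I] (s t : E → I) (v w : I → ℤ) : ℤ :=
  2 * ∑ i, v i * w i - ∑ h : E ⊕ E, v (dSrc s t h) * w (dTgt s t h)

section Reps

variable [Fintype E] [DecidableEq I]

abbrev Rep (s t : E → I) (v : I → ℕ) : Type :=
  ∀ h : E ⊕ E, Matrix (Fin (v (dTgt s t h))) (Fin (v (dSrc s t h))) ℂ

def castSq {a b : ℕ} (h : a = b) (M : Matrix (Fin a) (Fin a) ℂ) :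
    Matrix (Fin b) (Fin b) ℂ := h ▸ M

def pos {s t : E → I} {v : I → ℕ} (x : Rep s t v) (e : E) :
    Matrix (Fin (v (t e))) (Fin (v (s e))) ℂ := x (Sum.inl e)

def neg {s t : E → I} {v : I → ℕ} (x : Rep s t v) (e : E) :
    Matrix (Fin (v (s e))) (Fin (v (t e))) ℂ := x (Sum.inr e)

noncomputable def muC (s t : E → I) {v : I → ℕ} (x : Rep s t v) (i : I) :
    Matrix (Fin (v i)) (Fin (v i)) ℂ :=
  (∑ e : E, if hh : t e = i then castSq (congrArg v hh) (pos x e * neg x e) else 0)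
  - ∑ e : E, if hh : s e = i then castSq (congrArg v hh) (neg x e * pos x e) else 0

def IsPreprojRep (s t : E → I) {v : I → ℕ} (lam : I → ℂ) (x : Rep s t v) : Prop :=
  ∀ i, muC s t x i = lam i • (1 : Matrix (Fin (v i)) (Fin (v i)) ℂ)

/-- `Hom(v,w) = ⊕_i Hom(ℂ^{v_i}, ℂ^{w_i})`. -/
abbrev HomSp (v w : I → ℕ) : Type := ∀ i, Matrix (Fin (w i)) (Fin (v i)) ℂ

/-- `Rep(Q;v,w) = ⊕_{h ∈ Q̄} Hom(ℂ^{v_{s(h)}}, ℂ^{w_{t(h)}})`. -/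
abbrev RepHom (s t : E → I) (v w : I → ℕ) : Type :=
  ∀ h : E ⊕ E, Matrix (Fin (w (dTgt s t h))) (Fin (v (dSrc s t h))) ℂ

def posH {s t : E → I} {v w : I → ℕ} (f : RepHom s t v w) (e : E) :
    Matrix (Fin (w (t e))) (Fin (v (s e))) ℂ := f (Sum.inl e)

def negH {s t : E → I} {v w : I → ℕ} (f : RepHom s t v w) (e : E) :
    Matrix (Fin (w (s e))) (Fin (v (t e))) ℂ := f (Sum.inr e)

def castM {a b a' b' : ℕ} (h1 : a = a') (h2 : b = b')
    (M : Matrix (Fin a) (Fin b) ℂ) : Matrix (Fin a') (Fin b') ℂ :=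
  Matrix.of fun i j => M (Fin.cast h1.symm i) (Fin.cast h2.symm j)

theorem castM_add {a b a' b' : ℕ} (h1 : a = a') (h2 : b = b')
    (M N : Matrix (Fin a) (Fin b) ℂ) :
    castM h1 h2 (M + N) = castM h1 h2 M + castM h1 h2 N := by
  subst h1; subst h2; rfl

theorem castM_smul {a b a' b' : ℕ} (h1 : a = a') (h2 : b = b') (c : ℂ)
    (M : Matrix (Fin a) (Fin b) ℂ) :
    castM h1 h2 (c • M) = c • castM h1 h2 M := by
  subst h1; subst h2; rfl

theorem posH_add {s t : E → I} {v w : I → ℕ} (f g : RepHom s t v w) (e : E) :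
    posH (f + g) e = posH f e + posH g e := rfl

theorem negH_add {s t : E → I} {v w : I → ℕ} (f g : RepHom s t v w) (e : E) :
    negH (f + g) e = negH f e + negH g e := rfl

theorem posH_smul {s t : E → I} {v w : I → ℕ} (c : ℂ) (f : RepHom s t v w) (e : E) :
    posH (c • f) e = c • posH f e := rfl

theorem negH_smul {s t : E → I} {v w : I → ℕ} (c : ℂ) (f : RepHom s t v w) (e : E) :
    negH (c • f) e = c • negH f e := rfl

/-- The map `σ_{x,y}(u) = (u_{t(h)} x_h − y_h u_{s(h)})_{h ∈ Q̄}`. -/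
noncomputable def sigmaMap (s t : E → I) {v w : I → ℕ} (x : Rep s t v) (y : Rep s t w) :
    HomSp v w →ₗ[ℂ] RepHom s t v w where
  toFun u := fun h => u (dTgt s t h) * x h - y h * u (dSrc s t h)
  map_add' u u' := by
    funext h
    simp only [Pi.add_apply, Matrix.add_mul, Matrix.mul_add]
    abel
  map_smul' c u := by
    funext h
    simp only [Pi.smul_apply, Matrix.smul_mul, Matrix.mul_smul, RingHom.id_apply,
      smul_sub]

/-- The map `ν_{x,y}(f)_i = Σ_{h ∈ Q̄, t(h) = i} ε(h)(f_h x_{h̄} + y_h f_{h̄})`. -/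
noncomputable def nuMap (s t : E → I) {v w : I → ℕ} (x : Rep s t v) (y : Rep s t w) :
    RepHom s t v w →ₗ[ℂ] HomSp v w where
  toFun f := fun i =>
    (∑ e : E, if hh : t e = i then
        castM (congrArg w hh) (congrArg v hh)
          (posH f e * neg x e + pos y e * negH f e) else 0)
    - ∑ e : E, if hh : s e = i then
        castM (congrArg w hh) (congrArg v hh)
          (negH f e * pos x e + neg y e * posH f e) else 0
  map_add' f g := by
    funext i
    have e1 : ∀ e : E, (if hh : t e = i then
        castM (congrArg w hh) (congrArg v hh)
          (posH (f + g) e * neg x e + pos y e * negH (f + g) e) else 0)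
        = (if hh : t e = i then
            castM (congrArg w hh) (congrArg v hh)
              (posH f e * neg x e + pos y e * negH f e) else 0)
          + (if hh : t e = i then
            castM (congrArg w hh) (congrArg v hh)
              (posH g e * neg x e + pos y e * negH g e) else 0) := by
      intro e
      by_cases hh : t e = i
      · simp only [dif_pos hh, posH_add, negH_add, Matrix.add_mul, Matrix.mul_add,
          add_add_add_comm, castM_add]
      · simp [dif_neg hh]
    have e2 : ∀ e : E, (if hh : s e = i then
        castM (congrArg w hh) (congrArg v hh)
          (negH (f + g) e * pos x e + neg y e * posH (f + g) e) else 0)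
        = (if hh : s e = i then
            castM (congrArg w hh) (congrArg v hh)
              (negH f e * pos x e + neg y e * posH f e) else 0)
          + (if hh : s e = i then
            castM (congrArg w hh) (congrArg v hh)
              (negH g e * pos x e + neg y e * posH g e) else 0) := by
      intro e
      by_cases hh : s e = i
      · simp only [dif_pos hh, posH_add, negH_add, Matrix.add_mul, Matrix.mul_add,
          add_add_add_comm, castM_add]
      · simp [dif_neg hh]
    simp only [Pi.add_apply]
    rw [Finset.sum_congr rfl (fun e _ => e1 e), Finset.sum_congr rfl (fun e _ => e2 e),
      Finset.sum_add_distrib, Finset.sum_add_distrib]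
    abel
  map_smul' c f := by
    funext i
    have e1 : ∀ e : E, (if hh : t e = i then
        castM (congrArg w hh) (congrArg v hh)
          (posH (c • f) e * neg x e + pos y e * negH (c • f) e) else 0)
        = c • (if hh : t e = i then
            castM (congrArg w hh) (congrArg v hh)
              (posH f e * neg x e + pos y e * negH f e) else 0) := by
      intro e
      by_cases hh : t e = i
      · simp only [dif_pos hh, posH_smul, negH_smul, Matrix.smul_mul, Matrix.mul_smul,
          ← smul_add, castM_smul]
      · simp [dif_neg hh]
    have e2 : ∀ e : E, (if hh : s e = i then
        castM (congrArg w hh) (congrArg v hh)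
          (negH (c • f) e * pos x e + neg y e * posH (c • f) e) else 0)
        = c • (if hh : s e = i then
            castM (congrArg w hh) (congrArg v hh)
              (negH f e * pos x e + neg y e * posH f e) else 0) := by
      intro e
      by_cases hh : s e = i
      · simp only [dif_pos hh, posH_smul, negH_smul, Matrix.smul_mul, Matrix.mul_smul,
          ← smul_add, castM_smul]
      · simp [dif_neg hh]
    simp only [RingHom.id_apply, Pi.smul_apply]
    rw [Finset.sum_congr rfl (fun e _ => e1 e), Finset.sum_congr rfl (fun e _ => e2 e),
      ← Finset.smul_sum, ← Finset.smul_sum, smul_sub]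

end Reps

/-- The middle cohomology `H^1_Q(x,y) = ker ν_{x,y} / im σ_{x,y}` of the complex
`C_Q(x,y)`. -/
def H1 (s t : E → I) [Fintype E] [DecidableEq I] {v w : I → ℕ}
    (x : Rep s t v) (y : Rep s t w) : Type :=
  LinearMap.ker (nuMap s t x y) ⧸
    Submodule.comap (LinearMap.ker (nuMap s t x y)).subtype
      (LinearMap.range (sigmaMap s t x y))

noncomputable instance (s t : E → I) [Fintype E] [DecidableEq I] {v w : I → ℕ}
    (x : Rep s t v) (y : Rep s t w) : AddCommGroup (H1 s t x y) :=
  inferInstanceAs (AddCommGroup (LinearMap.ker (nuMap s t x y) ⧸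
    Submodule.comap (LinearMap.ker (nuMap s t x y)).subtype
      (LinearMap.range (sigmaMap s t x y))))

noncomputable instance (s t : E → I) [Fintype E] [DecidableEq I] {v w : I → ℕ}
    (x : Rep s t v) (y : Rep s t w) : Module ℂ (H1 s t x y) :=
  inferInstanceAs (Module ℂ (LinearMap.ker (nuMap s t x y) ⧸
    Submodule.comap (LinearMap.ker (nuMap s t x y)).subtype
      (LinearMap.range (sigmaMap s t x y))))

/-- A family of subspaces is a subrepresentation. -/
def IsSubrep (s t : E → I) [Fintype E] {v : I → ℕ} (x : Rep s t v)
    (U : ∀ i, Submodule ℂ (Fin (v i) → ℂ)) : Prop :=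
  ∀ h : E ⊕ E, ∀ u ∈ U (dSrc s t h), (x h).mulVec u ∈ U (dTgt s t h)

/-- A representation is simple. -/
def IsSimple (s t : E → I) [Fintype E] {v : I → ℕ} (x : Rep s t v) : Prop :=
  (∃ i, v i ≠ 0) ∧
    ∀ U : ∀ i, Submodule ℂ (Fin (v i) → ℂ), IsSubrep s t x U →
      (∀ i, U i = ⊥) ∨ (∀ i, U i = ⊤)

/-- Isomorphism of representations (of possibly different dimension vectors). -/
def RepIso (s t : E → I) [Fintype E] {v w : I → ℕ}
    (x : Rep s t v) (y : Rep s t w) : Prop :=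
  ∃ g : ∀ i, Matrix (Fin (w i)) (Fin (v i)) ℂ,
    (∀ i, Function.Bijective fun u : Fin (v i) → ℂ => (g i).mulVec u) ∧
    ∀ h : E ⊕ E, g (dTgt s t h) * x h = y h * g (dSrc s t h)

/-- Two points lie in the same `G_v^c` orbit. -/
def SameOrbitC (s t : E → I) [Fintype E] {v : I → ℕ} (x y : Rep s t v) : Prop :=
  ∃ g : ∀ i, Matrix.GeneralLinearGroup (Fin (v i)) ℂ,
    ∀ h : E ⊕ E, y h = (g (dTgt s t h)).val * x h * ((g (dSrc s t h))⁻¹).val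


section ProofAux

variable [Fintype E] [Fintype I] [DecidableEq I] {s t : E → I}

theorem castM_id {a b : ℕ} (h1 : a = a) (h2 : b = b) (M : Matrix (Fin a) (Fin b) ℂ) :
    castM h1 h2 M = M := rfl

theorem castSq_id {a : ℕ} (h : a = a) (M : Matrix (Fin a) (Fin a) ℂ) :
    castSq h M = M := rfl

theorem sigma_apply {v w : I → ℕ} (x : Rep s t v) (y : Rep s t w) (u : HomSp v w) (h : E ⊕ E) :
    sigmaMap s t x y u h = u (dTgt s t h) * x h - y h * u (dSrc s t h) := rfl

theorem nu_apply {v w : I → ℕ} (x : Rep s t v) (y : Rep s t w) (f : RepHom s t v w) (i : I) :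
    nuMap s t x y f i =
      (∑ e : E, if hh : t e = i then
        castM (congrArg w hh) (congrArg v hh)
          (posH f e * neg x e + pos y e * negH f e) else 0)
      - ∑ e : E, if hh : s e = i then
        castM (congrArg w hh) (congrArg v hh)
          (negH f e * pos x e + neg y e * posH f e) else 0 := rfl

theorem sum_dite_collapse {γ : Type*} [AddCommMonoid γ] (a : I) (F : ∀ i, a = i → γ) :
    (∑ i, if hh : a = i then F i hh else 0) = F a rfl := by
  rw [Finset.sum_dite_eq]; simp

theorem mem_ker_sigma {v w : I → ℕ} (x : Rep s t v) (y : Rep s t w) (u : HomSp v w) :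
    u ∈ LinearMap.ker (sigmaMap s t x y) ↔
      ∀ h : E ⊕ E, u (dTgt s t h) * x h = y h * u (dSrc s t h) := by
  rw [LinearMap.mem_ker, funext_iff]
  refine forall_congr' fun h => ?_
  rw [sigma_apply, Pi.zero_apply, sub_eq_zero]

theorem nu_sigma_apply_eq_zero {v w : I → ℕ} {lam : I → ℂ} {x : Rep s t v} {y : Rep s t w}
    (hx : IsPreprojRep s t lam x) (hy : IsPreprojRep s t lam y) (u : HomSp v w) :
    nuMap s t x y (sigmaMap s t x y u) = 0 := by
  funext i
  have key : ∀ (A C : Matrix (Fin (v i)) (Fin (v i)) ℂ) (B D : Matrix (Fin (w i)) (Fin (w i)) ℂ),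
      A - C = lam i • 1 → B - D = lam i • 1 →
      (u i * A - B * u i) - (u i * C - D * u i) = 0 := by
    intro A C B D h1 h2
    have e1 : (u i * A - B * u i) - (u i * C - D * u i)
        = u i * (A - C) - (B - D) * u i := by
      rw [Matrix.mul_sub, Matrix.sub_mul]; abel
    rw [e1, h1, h2]
    rw [Matrix.mul_smul, Matrix.smul_mul, Matrix.mul_one, Matrix.one_mul, sub_self]
  have ht : ∀ e : E,
      (if hh : t e = i then castM (congrArg w hh) (congrArg v hh)
        (posH (sigmaMap s t x y u) e * neg x e
          + pos y e * negH (sigmaMap s t x y u) e) else 0)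
      = u i * (if hh : t e = i then castSq (congrArg v hh) (pos x e * neg x e) else 0)
        - (if hh : t e = i then castSq (congrArg w hh) (pos y e * neg y e) else 0) * u i := by
    intro e
    by_cases hh : t e = i
    · subst hh
      rw [dif_pos rfl, dif_pos rfl, dif_pos rfl, castM_id, castSq_id, castSq_id]
      show (u (t e) * pos x e - pos y e * u (s e)) * neg x e
          + pos y e * (u (s e) * neg x e - neg y e * u (t e))
          = u (t e) * (pos x e * neg x e) - pos y e * neg y e * u (t e)
      simp only [Matrix.sub_mul, Matrix.mul_sub, Matrix.mul_assoc]
      abel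
    · rw [dif_neg hh, dif_neg hh, dif_neg hh]; simp
  have hs : ∀ e : E,
      (if hh : s e = i then castM (congrArg w hh) (congrArg v hh)
        (negH (sigmaMap s t x y u) e * pos x e
          + neg y e * posH (sigmaMap s t x y u) e) else 0)
      = u i * (if hh : s e = i then castSq (congrArg v hh) (neg x e * pos x e) else 0)
        - (if hh : s e = i then castSq (congrArg w hh) (neg y e * pos y e) else 0) * u i := by
    intro e
    by_cases hh : s e = i
    · subst hh
      rw [dif_pos rfl, dif_pos rfl, dif_pos rfl, castM_id, castSq_id, castSq_id]
      show (u (s e) * neg x e - neg y e * u (t e)) * pos x e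
          + neg y e * (u (t e) * pos x e - pos y e * u (s e))
          = u (s e) * (neg x e * pos x e) - neg y e * pos y e * u (s e)
      simp only [Matrix.sub_mul, Matrix.mul_sub, Matrix.mul_assoc]
      abel
    · rw [dif_neg hh, dif_neg hh, dif_neg hh]; simp
  rw [nu_apply, Pi.zero_apply]
  rw [Finset.sum_congr rfl (fun e _ => ht e), Finset.sum_congr rfl (fun e _ => hs e)]
  rw [Finset.sum_sub_distrib, Finset.sum_sub_distrib, ← Matrix.mul_sum, ← Matrix.mul_sum,
    ← Matrix.sum_mul, ← Matrix.sum_mul]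
  exact key _ _ _ _ (hx i) (hy i)

theorem range_sigma_le_ker_nu {v w : I → ℕ} {lam : I → ℂ} {x : Rep s t v} {y : Rep s t w}
    (hx : IsPreprojRep s t lam x) (hy : IsPreprojRep s t lam y) :
    LinearMap.range (sigmaMap s t x y) ≤ LinearMap.ker (nuMap s t x y) := by
  rintro _ ⟨u, rfl⟩
  exact LinearMap.mem_ker.2 (nu_sigma_apply_eq_zero hx hy u)

/-! ### Trace pairings -/

theorem trace_mul_stdBasis {m n : ℕ} (A : Matrix (Fin m) (Fin n) ℂ) (k : Fin m) (l : Fin n) :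
    (A * Matrix.single l k (1:ℂ)).trace = A k l := by
  simp [Matrix.trace, Matrix.diag, Matrix.mul_apply, Matrix.single, ite_and]

noncomputable def pairHom (v w : I → ℕ) : HomSp v w →ₗ[ℂ] Module.Dual ℂ (HomSp w v) where
  toFun a :=
    { toFun := fun u => ∑ i, (a i * u i).trace
      map_add' := fun u u' => by
        simp [Pi.add_apply, Matrix.mul_add, Matrix.trace_add, Finset.sum_add_distrib]
      map_smul' := fun c u => by
        simp only [Pi.smul_apply, Matrix.mul_smul, Matrix.trace_smul, RingHom.id_apply,
          smul_eq_mul]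
        rw [Finset.mul_sum] }
  map_add' a a' := by
    apply LinearMap.ext; intro u
    simp [Pi.add_apply, Matrix.add_mul, Matrix.trace_add, Finset.sum_add_distrib]
  map_smul' c a := by
    apply LinearMap.ext; intro u
    simp only [Pi.smul_apply, Matrix.smul_mul, Matrix.trace_smul, RingHom.id_apply,
      LinearMap.coe_mk, AddHom.coe_mk, LinearMap.smul_apply, smul_eq_mul]
    rw [Finset.mul_sum]

noncomputable def pairRep (s t : E → I) (v w : I → ℕ) :
    RepHom s t v w →ₗ[ℂ] Module.Dual ℂ (RepHom s t w v) where
  toFun f :=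
    { toFun := fun g => (∑ e : E, (posH f e * negH g e).trace)
        - ∑ e : E, (negH f e * posH g e).trace
      map_add' := fun g g' => by
        simp only [posH_add, negH_add, Matrix.mul_add, Matrix.trace_add,
          Finset.sum_add_distrib]
        ring
      map_smul' := fun c g => by
        simp only [posH_smul, negH_smul, Matrix.mul_smul, Matrix.trace_smul, RingHom.id_apply,
          smul_eq_mul]
        rw [mul_sub, Finset.mul_sum, Finset.mul_sum] }
  map_add' f f' := by
    apply LinearMap.ext; intro g
    simp only [posH_add, negH_add, Matrix.add_mul, Matrix.trace_add, Finset.sum_add_distrib,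
      LinearMap.coe_mk, AddHom.coe_mk, LinearMap.add_apply]
    ring
  map_smul' c f := by
    apply LinearMap.ext; intro g
    simp only [posH_smul, negH_smul, Matrix.smul_mul, Matrix.trace_smul, RingHom.id_apply,
      LinearMap.coe_mk, AddHom.coe_mk, LinearMap.smul_apply, smul_eq_mul]
    rw [mul_sub, Finset.mul_sum, Finset.mul_sum]

theorem pairHom_apply {v w : I → ℕ} (a : HomSp v w) (u : HomSp w v) :
    pairHom v w a u = ∑ i, (a i * u i).trace := rfl

theorem pairRep_apply {v w : I → ℕ} (f : RepHom s t v w) (g : RepHom s t w v) :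
    pairRep s t v w f g = (∑ e : E, (posH f e * negH g e).trace)
        - ∑ e : E, (negH f e * posH g e).trace := rfl

theorem pairHom_injective (v w : I → ℕ) : Function.Injective (pairHom (I := I) v w) := by
  rw [injective_iff_map_eq_zero]
  intro a ha
  funext i
  apply Matrix.ext
  intro k l
  classical
  have hu : ∀ M : Matrix (Fin (v i)) (Fin (w i)) ℂ, (a i * M).trace = 0 := by
    intro M
    set u : HomSp w v := fun j =>
      if hh : i = j then castM (congrArg v hh) (congrArg w hh) M else 0 with hudef
    have h0 := congrFun (congrArg (fun φ : Module.Dual ℂ (HomSp w v) => φ.toFun) ha) u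
    have h1 : pairHom v w a u = 0 := h0
    rw [pairHom_apply] at h1
    have h2 : ∀ j, (a j * u j).trace
        = if hh : i = j then (a j * castM (congrArg v hh) (congrArg w hh) M).trace else 0 := by
      intro j
      by_cases hh : i = j
      · rw [dif_pos hh, hudef]; simp only [dif_pos hh]
      · rw [hudef]; simp only [dif_neg hh]; simp
    rw [Finset.sum_congr rfl (fun j _ => h2 j), sum_dite_collapse, castM_id] at h1
    exact h1
  have := hu (Matrix.single l k 1)
  rwa [trace_mul_stdBasis] at this

theorem pairRep_posneg_zero {v w : I → ℕ} (f : RepHom s t v w)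
    (hf : ∀ g : RepHom s t w v, pairRep s t v w f g = 0) :
    f = 0 := by
  classical
  have hpos : ∀ e0 : E, posH f e0 = 0 := by
    intro e0
    apply Matrix.ext
    intro k l
    have hM : ∀ M : Matrix (Fin (v (s e0))) (Fin (w (t e0))) ℂ, (posH f e0 * M).trace = 0 := by
      intro M
      let g : RepHom s t w v := fun h' =>
        match h' with
        | Sum.inl _ => 0
        | Sum.inr e => if hh : e0 = e then
            castM (congrArg (fun e' => v (s e')) hh) (congrArg (fun e' => w (t e')) hh) M
          else 0
      have h1 := hf g
      rw [pairRep_apply] at h1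
      have hnegg : ∀ e : E, (posH f e * negH g e).trace
          = if hh : e0 = e then (posH f e *
              castM (congrArg (fun e' => v (s e')) hh) (congrArg (fun e' => w (t e')) hh) M).trace
            else 0 := by
        intro e
        by_cases hh : e0 = e
        · subst hh
          rw [dif_pos rfl]
          have hng : negH g e0
              = castM (congrArg (fun e' => v (s e')) (rfl : e0 = e0))
                  (congrArg (fun e' => w (t e')) (rfl : e0 = e0)) M := dif_pos rfl
          rw [hng]
        · rw [dif_neg hh]
          have hng : negH g e = 0 := dif_neg hh
          rw [hng]
          simp
      rw [Finset.sum_congr rfl (fun e _ => hnegg e), sum_dite_collapse, castM_id] at h1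
      have hz : ∀ e : E, (negH f e * posH g e).trace = 0 := by
        intro e
        have hpg : posH g e = 0 := rfl
        rw [hpg]; simp
      rw [Finset.sum_congr rfl (fun e _ => hz e)] at h1
      simpa using h1
    have := hM (Matrix.single l k 1)
    rwa [trace_mul_stdBasis] at this
  have hneg : ∀ e0 : E, negH f e0 = 0 := by
    intro e0
    apply Matrix.ext
    intro k l
    have hM : ∀ M : Matrix (Fin (v (t e0))) (Fin (w (s e0))) ℂ, (negH f e0 * M).trace = 0 := by
      intro M
      let g : RepHom s t w v := fun h' =>
        match h' with
        | Sum.inr _ => 0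
        | Sum.inl e => if hh : e0 = e then
            castM (congrArg (fun e' => v (t e')) hh) (congrArg (fun e' => w (s e')) hh) M
          else 0
      have h1 := hf g
      rw [pairRep_apply] at h1
      have hz : ∀ e : E, (posH f e * negH g e).trace = 0 := by
        intro e
        have hng : negH g e = 0 := rfl
        rw [hng]; simp
      rw [Finset.sum_congr rfl (fun e _ => hz e)] at h1
      have hposg : ∀ e : E, (negH f e * posH g e).trace
          = if hh : e0 = e then (negH f e *
              castM (congrArg (fun e' => v (t e')) hh) (congrArg (fun e' => w (s e')) hh) M).trace
            else 0 := by
        intro e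
        by_cases hh : e0 = e
        · subst hh
          rw [dif_pos rfl]
          have hpg : posH g e0
              = castM (congrArg (fun e' => v (t e')) (rfl : e0 = e0))
                  (congrArg (fun e' => w (s e')) (rfl : e0 = e0)) M := dif_pos rfl
          rw [hpg]
        · rw [dif_neg hh]
          have hpg : posH g e = 0 := dif_neg hh
          rw [hpg]
          simp
      rw [Finset.sum_congr rfl (fun e _ => hposg e), sum_dite_collapse, castM_id] at h1
      simpa using h1
    have := hM (Matrix.single l k 1)
    rwa [trace_mul_stdBasis] at this
  funext h
  cases h with
  | inl e => exact hpos e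
  | inr e => exact hneg e

theorem pairRep_injective (v w : I → ℕ) :
    Function.Injective (pairRep s t v w) := by
  rw [injective_iff_map_eq_zero]
  intro f hf
  exact pairRep_posneg_zero f (fun g => by rw [hf]; rfl)

set_option maxHeartbeats 1000000
set_option synthInstance.maxHeartbeats 400000

theorem pair_adj {v w : I → ℕ} (x : Rep s t v) (y : Rep s t w) (f : RepHom s t v w)
    (u : HomSp w v) :
    pairHom v w (nuMap s t x y f) u = -(pairRep s t v w f (sigmaMap s t y x u)) := by
  rw [pairHom_apply]
  have hterm : ∀ i, ((nuMap s t x y f) i * u i).trace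
      = (∑ e : E, if hh : t e = i then
          (castM (congrArg w hh) (congrArg v hh)
            (posH f e * neg x e + pos y e * negH f e) * u i).trace else 0)
        - ∑ e : E, if hh : s e = i then
          (castM (congrArg w hh) (congrArg v hh)
            (negH f e * pos x e + neg y e * posH f e) * u i).trace else 0 := by
    intro i
    rw [nu_apply, Matrix.sub_mul, Matrix.trace_sub, Matrix.sum_mul, Matrix.sum_mul,
      Matrix.trace_sum, Matrix.trace_sum]
    congr 1
    · refine Finset.sum_congr rfl fun e _ => ?_
      by_cases hh : t e = i
      · rw [dif_pos hh, dif_pos hh]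
      · rw [dif_neg hh, dif_neg hh]; simp
    · refine Finset.sum_congr rfl fun e _ => ?_
      by_cases hh : s e = i
      · rw [dif_pos hh, dif_pos hh]
      · rw [dif_neg hh, dif_neg hh]; simp
  have hcol1 : ∀ e : E, (∑ i, if hh : t e = i then
      (castM (congrArg w hh) (congrArg v hh)
        (posH f e * neg x e + pos y e * negH f e) * u i).trace else 0)
      = ((posH f e * neg x e + pos y e * negH f e) * u (t e)).trace := by
    intro e
    rw [sum_dite_collapse (t e)
      (fun i hh => (castM (congrArg w hh) (congrArg v hh)
        (posH f e * neg x e + pos y e * negH f e) * u i).trace), castM_id]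
  have hcol2 : ∀ e : E, (∑ i, if hh : s e = i then
      (castM (congrArg w hh) (congrArg v hh)
        (negH f e * pos x e + neg y e * posH f e) * u i).trace else 0)
      = ((negH f e * pos x e + neg y e * posH f e) * u (s e)).trace := by
    intro e
    rw [sum_dite_collapse (s e)
      (fun i hh => (castM (congrArg w hh) (congrArg v hh)
        (negH f e * pos x e + neg y e * posH f e) * u i).trace), castM_id]
  have hL : (∑ i, ((nuMap s t x y f) i * u i).trace)
      = (∑ e : E, ((posH f e * neg x e + pos y e * negH f e) * u (t e)).trace)
        - ∑ e : E, ((negH f e * pos x e + neg y e * posH f e) * u (s e)).trace := by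
    rw [Finset.sum_congr rfl (fun i _ => hterm i), Finset.sum_sub_distrib]
    congr 1
    · rw [Finset.sum_comm]
      exact Finset.sum_congr rfl fun e _ => hcol1 e
    · rw [Finset.sum_comm]
      exact Finset.sum_congr rfl fun e _ => hcol2 e
  rw [hL, pairRep_apply, neg_sub]
  have hps : ∀ e : E, posH (sigmaMap s t y x u) e
      = u (t e) * pos y e - pos x e * u (s e) := fun _ => rfl
  have hns : ∀ e : E, negH (sigmaMap s t y x u) e
      = u (s e) * neg y e - neg x e * u (t e) := fun _ => rfl
  rw [Finset.sum_congr rfl (fun e _ => by rw [hns e] :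
      ∀ e ∈ Finset.univ, (posH f e * negH (sigmaMap s t y x u) e).trace
        = (posH f e * (u (s e) * neg y e - neg x e * u (t e))).trace),
    Finset.sum_congr rfl (fun e _ => by rw [hps e] :
      ∀ e ∈ Finset.univ, (negH f e * posH (sigmaMap s t y x u) e).trace
        = (negH f e * (u (t e) * pos y e - pos x e * u (s e))).trace)]
  rw [← Finset.sum_sub_distrib, ← Finset.sum_sub_distrib]
  refine Finset.sum_congr rfl fun e _ => ?_
  simp only [Matrix.add_mul, Matrix.mul_sub, Matrix.trace_add, Matrix.trace_sub,
    ← Matrix.mul_assoc]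
  rw [show (pos y e * negH f e * u (t e)).trace
      = (negH f e * u (t e) * pos y e).trace from by
        rw [Matrix.trace_mul_cycle, Matrix.trace_mul_cycle],
    show (neg y e * posH f e * u (s e)).trace
      = (posH f e * u (s e) * neg y e).trace from by
        rw [Matrix.trace_mul_cycle, Matrix.trace_mul_cycle]]
  ring

theorem finrank_RepHom (v w : I → ℕ) : Module.finrank ℂ (RepHom s t v w)
    = ∑ h : E ⊕ E, w (dTgt s t h) * v (dSrc s t h) := by
  rw [Module.finrank_pi_fintype]
  exact Finset.sum_congr rfl fun h _ => by
    simp [Module.finrank_matrix, Fintype.card_fin]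

theorem finrank_HomSp (v w : I → ℕ) : Module.finrank ℂ (HomSp v w) = ∑ i, w i * v i := by
  rw [Module.finrank_pi_fintype]
  exact Finset.sum_congr rfl fun i _ => by
    simp [Module.finrank_matrix, Fintype.card_fin]

theorem finrank_RepHom_symm (v w : I → ℕ) :
    Module.finrank ℂ (RepHom s t v w) = Module.finrank ℂ (RepHom s t w v) := by
  rw [finrank_RepHom, finrank_RepHom, Fintype.sum_sum_type, Fintype.sum_sum_type]
  rw [add_comm]
  congr 1 <;> exact Finset.sum_congr rfl fun e _ => mul_comm _ _

theorem finrank_range_nu {v w : I → ℕ} (x : Rep s t v) (y : Rep s t w) :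
    Module.finrank ℂ (LinearMap.range (nuMap s t x y))
      = Module.finrank ℂ (LinearMap.range (sigmaMap s t y x)) := by
  have hcomp : pairHom v w ∘ₗ nuMap s t x y
      = -((sigmaMap s t y x).dualMap ∘ₗ pairRep s t v w) := by
    apply LinearMap.ext; intro f
    apply LinearMap.ext; intro u
    simp only [LinearMap.comp_apply, LinearMap.neg_apply, LinearMap.dualMap_apply]
    exact pair_adj x y f u
  have hsur : Function.Surjective (pairRep s t v w) := by
    have hd : Module.finrank ℂ (RepHom s t v w)
        = Module.finrank ℂ (Module.Dual ℂ (RepHom s t w v)) := by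
      rw [Subspace.dual_finrank_eq]; exact finrank_RepHom_symm v w
    exact (LinearMap.injective_iff_surjective_of_finrank_eq_finrank hd).1
      (pairRep_injective v w)
  have h1 : (LinearMap.range (nuMap s t x y)).map (pairHom v w)
      = LinearMap.range ((sigmaMap s t y x).dualMap) := by
    rw [← LinearMap.range_comp, hcomp, LinearMap.range_neg, LinearMap.range_comp,
      LinearMap.range_eq_top.2 hsur, Submodule.map_top]
  calc Module.finrank ℂ (LinearMap.range (nuMap s t x y))
      = Module.finrank ℂ ((LinearMap.range (nuMap s t x y)).map (pairHom v w)) :=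
        (Submodule.equivMapOfInjective _ (pairHom_injective v w) _).finrank_eq
    _ = Module.finrank ℂ (LinearMap.range ((sigmaMap s t y x).dualMap)) := by rw [h1]
    _ = Module.finrank ℂ (LinearMap.range (sigmaMap s t y x)) :=
        LinearMap.finrank_range_dualMap_eq_finrank_range _

/-! ### Kernels of sigma: Schur theory -/

theorem matrix_eq_zero {m n : ℕ} (M : Matrix (Fin m) (Fin n) ℂ)
    (h : ∀ a, M.mulVec a = 0) : M = 0 := by
  ext i j
  have := congrFun (h (Pi.single j 1)) i
  rwa [Matrix.mulVec_single_one] at this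

theorem mulVecLin_inj {m n : ℕ} {M N : Matrix (Fin m) (Fin n) ℂ}
    (h : M.mulVecLin = N.mulVecLin) : M = N := by
  ext i j
  have h2 := LinearMap.congr_fun h (Pi.single j 1)
  rw [Matrix.mulVecLin_apply, Matrix.mulVecLin_apply, Matrix.mulVec_single_one,
    Matrix.mulVec_single_one] at h2
  exact congrFun h2 i

theorem hom_bijective {v w : I → ℕ} {x : Rep s t v} {y : Rep s t w}
    (hx : IsSimple s t x) (hy : IsSimple s t y) (u : HomSp v w)
    (hu : ∀ h : E ⊕ E, u (dTgt s t h) * x h = y h * u (dSrc s t h)) (hne : u ≠ 0) :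
    ∀ i, Function.Bijective fun a : Fin (v i) → ℂ => (u i).mulVec a := by
  obtain ⟨i0, hi0⟩ : ∃ i, u i ≠ 0 := by
    by_contra hc; push_neg at hc; exact hne (funext hc)
  have hker : ∀ i, LinearMap.ker (u i).mulVecLin = ⊥ := by
    have hsub : IsSubrep s t x (fun i => LinearMap.ker (u i).mulVecLin) := by
      intro h a ha
      simp only [LinearMap.mem_ker, Matrix.mulVecLin_apply] at ha ⊢
      rw [Matrix.mulVec_mulVec, hu h, ← Matrix.mulVec_mulVec, ha, Matrix.mulVec_zero]
    rcases hx.2 _ hsub with hb | ht'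
    · exact hb
    · exfalso
      apply hi0
      apply matrix_eq_zero
      intro a
      have : a ∈ LinearMap.ker (u i0).mulVecLin := by rw [ht' i0]; trivial
      simpa using this
  have hrng : ∀ i, LinearMap.range (u i).mulVecLin = ⊤ := by
    have hsub : IsSubrep s t y (fun i => LinearMap.range (u i).mulVecLin) := by
      intro h b hb
      obtain ⟨a, rfl⟩ := hb
      refine ⟨(x h).mulVec a, ?_⟩
      simp only [Matrix.mulVecLin_apply]
      rw [Matrix.mulVec_mulVec, Matrix.mulVec_mulVec, ← hu h]
    rcases hy.2 _ hsub with hb | ht'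
    · exfalso
      apply hi0
      have : (u i0).mulVecLin = 0 := LinearMap.range_eq_bot.1 (hb i0)
      apply matrix_eq_zero
      intro a
      rw [← Matrix.mulVecLin_apply, this]; rfl
    · exact ht'
  intro i
  constructor
  · exact LinearMap.ker_eq_bot.1 (hker i)
  · exact LinearMap.range_eq_top.1 (hrng i)

theorem endo_scalar {v : I → ℕ} {x : Rep s t v} (hx : IsSimple s t x) (u : HomSp v v)
    (hu : ∀ h : E ⊕ E, u (dTgt s t h) * x h = x h * u (dSrc s t h)) :
    ∃ c : ℂ, u = fun i => c • (1 : Matrix (Fin (v i)) (Fin (v i)) ℂ) := by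
  obtain ⟨i0, hi0⟩ := hx.1
  haveI : Nonempty (Fin (v i0)) := ⟨⟨0, Nat.pos_of_ne_zero hi0⟩⟩
  obtain ⟨c, hc⟩ := Module.End.exists_eigenvalue ((u i0).mulVecLin)
  obtain ⟨a, ha⟩ := hc.exists_hasEigenvector
  refine ⟨c, ?_⟩
  have hu'int : ∀ h : E ⊕ E,
      (fun i => u i - c • (1 : Matrix (Fin (v i)) (Fin (v i)) ℂ)) (dTgt s t h) * x h
      = x h * (fun i => u i - c • (1 : Matrix (Fin (v i)) (Fin (v i)) ℂ)) (dSrc s t h) := by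
    intro h
    show (u (dTgt s t h) - c • 1) * x h = x h * (u (dSrc s t h) - c • 1)
    rw [Matrix.sub_mul, Matrix.mul_sub, hu h, Matrix.smul_mul, Matrix.mul_smul,
      Matrix.one_mul, Matrix.mul_one]
  by_cases h0 : (fun i => u i - c • (1 : Matrix (Fin (v i)) (Fin (v i)) ℂ)) = 0
  · funext i
    have := congrFun h0 i
    simpa [sub_eq_zero] using this
  · exfalso
    have hbij := hom_bijective hx hx _ hu'int h0
    have ha0 : (u i0 - c • (1 : Matrix (Fin (v i0)) (Fin (v i0)) ℂ)).mulVec a = 0 := by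
      have happ : (u i0).mulVec a = c • a := ha.apply_eq_smul
      rw [Matrix.sub_mulVec, happ, Matrix.smul_mulVec, Matrix.one_mulVec, sub_self]
    refine ha.2 ((hbij i0).1 ?_)
    show (u i0 - c • (1 : Matrix (Fin (v i0)) (Fin (v i0)) ℂ)) *ᵥ a
      = (u i0 - c • 1) *ᵥ (0 : Fin (v i0) → ℂ)
    rw [ha0, Matrix.mulVec_zero]

theorem ker_sigma_bot {v w : I → ℕ} {x : Rep s t v} {y : Rep s t w}
    (hx : IsSimple s t x) (hy : IsSimple s t y) (hni : ¬ RepIso s t x y) :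
    LinearMap.ker (sigmaMap s t x y) = ⊥ := by
  rw [Submodule.eq_bot_iff]
  intro u hu
  by_contra hne
  exact hni ⟨u, hom_bijective hx hy u ((mem_ker_sigma x y u).1 hu) hne,
    (mem_ker_sigma x y u).1 hu⟩

theorem repIso_symm {v w : I → ℕ} {x : Rep s t v} {y : Rep s t w}
    (hiso : RepIso s t x y) : RepIso s t y x := by
  obtain ⟨g, hbij, hint⟩ := hiso
  let L : ∀ i, (Fin (v i) → ℂ) ≃ₗ[ℂ] (Fin (w i) → ℂ) :=
    fun i => LinearEquiv.ofBijective ((g i).mulVecLin) (hbij i)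
  let g' : ∀ i, Matrix (Fin (v i)) (Fin (w i)) ℂ :=
    fun i => LinearMap.toMatrix' ((L i).symm : (Fin (w i) → ℂ) →ₗ[ℂ] (Fin (v i) → ℂ))
  have hg'lin : ∀ i, (g' i).mulVecLin
      = ((L i).symm : (Fin (w i) → ℂ) →ₗ[ℂ] (Fin (v i) → ℂ)) := by
    intro i
    apply LinearMap.ext; intro a
    rw [Matrix.mulVecLin_apply, ← Matrix.toLin'_apply, Matrix.toLin'_toMatrix']
  have hg'g : ∀ i, g' i * g i = 1 := by
    intro i
    apply mulVecLin_inj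
    rw [Matrix.mulVecLin_mul, hg'lin, Matrix.mulVecLin_one]
    apply LinearMap.ext; intro a
    simp only [LinearMap.comp_apply, LinearMap.id_apply, LinearEquiv.coe_coe]
    show (L i).symm ((g i).mulVecLin a) = a
    exact (L i).symm_apply_apply a
  have hgg' : ∀ i, g i * g' i = 1 := by
    intro i
    apply mulVecLin_inj
    rw [Matrix.mulVecLin_mul, hg'lin, Matrix.mulVecLin_one]
    apply LinearMap.ext; intro a
    simp only [LinearMap.comp_apply, LinearMap.id_apply, LinearEquiv.coe_coe]
    show (g i).mulVecLin ((L i).symm a) = a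
    exact (L i).apply_symm_apply a
  refine ⟨g', fun i => ?_, fun h => ?_⟩
  · have : (fun a : Fin (w i) → ℂ => (g' i).mulVec a) = ⇑((L i).symm) := by
      funext a
      rw [← Matrix.mulVecLin_apply, hg'lin]
      rfl
    rw [this]
    exact (L i).symm.bijective
  · have h1 : g' (dTgt s t h) * y h * (g (dSrc s t h) * g' (dSrc s t h))
        = g' (dTgt s t h) * y h := by rw [hgg', Matrix.mul_one]
    calc g' (dTgt s t h) * y h
        = g' (dTgt s t h) * y h * (g (dSrc s t h) * g' (dSrc s t h)) := h1.symm
      _ = g' (dTgt s t h) * (y h * g (dSrc s t h)) * g' (dSrc s t h) := by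
          simp only [Matrix.mul_assoc]
      _ = g' (dTgt s t h) * (g (dTgt s t h) * x h) * g' (dSrc s t h) := by rw [← hint h]
      _ = (g' (dTgt s t h) * g (dTgt s t h)) * (x h * g' (dSrc s t h)) := by
          simp only [Matrix.mul_assoc]
      _ = x h * g' (dSrc s t h) := by rw [hg'g, Matrix.one_mul]

theorem ker_sigma_orbit {v : I → ℕ} {z w : Rep s t v} (hz : IsSimple s t z)
    (horb : SameOrbitC s t z w) :
    Module.finrank ℂ (LinearMap.ker (sigmaMap s t z w)) = 1 ∧
    Module.finrank ℂ (LinearMap.ker (sigmaMap s t w z)) = 1 := by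
  obtain ⟨g, hg⟩ := horb
  obtain ⟨i0, hi0⟩ := hz.1
  have hint : ∀ h : E ⊕ E, (g (dTgt s t h)).val * z h = w h * (g (dSrc s t h)).val := by
    intro h
    rw [hg h, Matrix.mul_assoc ((g (dTgt s t h)).val * z h), Units.inv_mul, Matrix.mul_one]
  have hint' : ∀ h : E ⊕ E,
      ((g (dTgt s t h))⁻¹).val * w h = z h * ((g (dSrc s t h))⁻¹).val := by
    intro h
    rw [hg h, ← Matrix.mul_assoc, ← Matrix.mul_assoc, Units.inv_mul, Matrix.one_mul]
  constructor
  · have k1 : LinearMap.ker (sigmaMap s t z w)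
        = Submodule.span ℂ {fun i => (g i).val} := by
      apply le_antisymm
      · intro u hu
        have hu' := (mem_ker_sigma z w u).1 hu
        have hend : ∀ h : E ⊕ E,
            (fun i => ((g i)⁻¹).val * u i) (dTgt s t h) * z h
            = z h * (fun i => ((g i)⁻¹).val * u i) (dSrc s t h) := by
          intro h
          show ((g (dTgt s t h))⁻¹).val * u (dTgt s t h) * z h
            = z h * (((g (dSrc s t h))⁻¹).val * u (dSrc s t h))
          rw [Matrix.mul_assoc, hu' h, ← Matrix.mul_assoc, hint' h, Matrix.mul_assoc]
        obtain ⟨c, hc⟩ := endo_scalar hz (fun i => ((g i)⁻¹).val * u i) hend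
        apply Submodule.mem_span_singleton.2
        refine ⟨c, ?_⟩
        funext i
        have hci : ((g i)⁻¹).val * u i = c • 1 := congrFun hc i
        calc (c • fun j => (g j).val) i = c • (g i).val := rfl
          _ = (g i).val * (c • (1 : Matrix (Fin (v i)) (Fin (v i)) ℂ)) := by
              rw [Matrix.mul_smul, Matrix.mul_one]
          _ = (g i).val * (((g i)⁻¹).val * u i) := by rw [← hci]
          _ = u i := by rw [← Matrix.mul_assoc, Units.mul_inv, Matrix.one_mul]
      · exact Submodule.span_le.2 (Set.singleton_subset_iff.2
          ((mem_ker_sigma z w _).2 hint))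
    rw [k1]
    apply finrank_span_singleton
    intro h0
    have h1 : (g i0).val = 0 := congrFun h0 i0
    have h2 := Units.mul_inv (g i0)
    rw [h1, Matrix.zero_mul] at h2
    have h3 := congrFun (congrFun h2 ⟨0, Nat.pos_of_ne_zero hi0⟩)
      ⟨0, Nat.pos_of_ne_zero hi0⟩
    rw [Matrix.one_apply_eq] at h3
    exact zero_ne_one (α := ℂ) (by simpa using h3)
  · have k2 : LinearMap.ker (sigmaMap s t w z)
        = Submodule.span ℂ {fun i => ((g i)⁻¹).val} := by
      apply le_antisymm
      · intro u hu
        have hu' := (mem_ker_sigma w z u).1 hu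
        have hend : ∀ h : E ⊕ E,
            (fun i => u i * (g i).val) (dTgt s t h) * z h
            = z h * (fun i => u i * (g i).val) (dSrc s t h) := by
          intro h
          show u (dTgt s t h) * (g (dTgt s t h)).val * z h
            = z h * (u (dSrc s t h) * (g (dSrc s t h)).val)
          rw [Matrix.mul_assoc, hint h, ← Matrix.mul_assoc, hu' h, Matrix.mul_assoc]
        obtain ⟨c, hc⟩ := endo_scalar hz (fun i => u i * (g i).val) hend
        apply Submodule.mem_span_singleton.2
        refine ⟨c, ?_⟩
        funext i
        have hci : u i * (g i).val = c • 1 := congrFun hc i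
        calc (c • fun j => ((g j)⁻¹).val) i = c • ((g i)⁻¹).val := rfl
          _ = (c • (1 : Matrix (Fin (v i)) (Fin (v i)) ℂ)) * ((g i)⁻¹).val := by
              rw [Matrix.smul_mul, Matrix.one_mul]
          _ = (u i * (g i).val) * ((g i)⁻¹).val := by rw [← hci]
          _ = u i := by rw [Matrix.mul_assoc, Units.mul_inv, Matrix.mul_one]
      · exact Submodule.span_le.2 (Set.singleton_subset_iff.2
          ((mem_ker_sigma w z _).2 hint'))
    rw [k2]
    apply finrank_span_singleton
    intro h0
    have h1 : ((g i0)⁻¹).val = 0 := congrFun h0 i0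
    have h2 := Units.inv_mul (g i0)
    rw [h1, Matrix.zero_mul] at h2
    have h3 := congrFun (congrFun h2 ⟨0, Nat.pos_of_ne_zero hi0⟩)
      ⟨0, Nat.pos_of_ne_zero hi0⟩
    rw [Matrix.one_apply_eq] at h3
    exact zero_ne_one (α := ℂ) (by simpa using h3)

theorem finrank_H1_eq {v w : I → ℕ} {lam : I → ℂ} (x : Rep s t v) (y : Rep s t w)
    (hx : IsPreprojRep s t lam x) (hy : IsPreprojRep s t lam y) :
    (Module.finrank ℂ (H1 s t x y) : ℤ)
      = ((∑ h : E ⊕ E, w (dTgt s t h) * v (dSrc s t h) : ℕ) : ℤ)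
        - ((∑ i, w i * v i : ℕ) : ℤ) - ((∑ i, v i * w i : ℕ) : ℤ)
        + Module.finrank ℂ (LinearMap.ker (sigmaMap s t x y))
        + Module.finrank ℂ (LinearMap.ker (sigmaMap s t y x)) := by
  have hle := range_sigma_le_ker_nu hx hy
  have e0 : Module.finrank ℂ (H1 s t x y)
      = Module.finrank ℂ ((LinearMap.ker (nuMap s t x y)) ⧸
          Submodule.comap (LinearMap.ker (nuMap s t x y)).subtype
            (LinearMap.range (sigmaMap s t x y))) := rfl
  have h1 := Submodule.finrank_quotient_add_finrank
      (Submodule.comap (LinearMap.ker (nuMap s t x y)).subtype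
        (LinearMap.range (sigmaMap s t x y)))
  have h2 : Module.finrank ℂ (Submodule.comap (LinearMap.ker (nuMap s t x y)).subtype
        (LinearMap.range (sigmaMap s t x y)))
      = Module.finrank ℂ (LinearMap.range (sigmaMap s t x y)) :=
    (Submodule.comapSubtypeEquivOfLe hle).finrank_eq
  have h3 := LinearMap.finrank_range_add_finrank_ker (nuMap s t x y)
  have h4 := LinearMap.finrank_range_add_finrank_ker (sigmaMap s t x y)
  have h5 := LinearMap.finrank_range_add_finrank_ker (sigmaMap s t y x)
  have h6 := finrank_range_nu x y
  rw [finrank_RepHom] at h3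
  rw [finrank_HomSp] at h4 h5
  rw [e0]
  omega

end ProofAux

theorem lemma_H1_dimension_between_simples
    [Fintype E] [Fintype I] [DecidableEq I] (s t : E → I) (lam : I → ℂ) :
    (∀ (β γ : I → ℕ) (z : Rep s t β) (w : Rep s t γ),
        IsPreprojRep s t lam z → IsPreprojRep s t lam w →
        IsSimple s t z → IsSimple s t w → ¬RepIso s t z w →
        (Module.finrank ℂ (H1 s t z w) : ℤ) =
          -qform s t (fun i => (β i : ℤ)) (fun i => (γ i : ℤ))) ∧
    (∀ (β : I → ℕ) (z w : Rep s t β),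
        IsPreprojRep s t lam z → IsPreprojRep s t lam w →
        IsSimple s t z → IsSimple s t w → SameOrbitC s t z w →
        (Module.finrank ℂ (H1 s t z w) : ℤ) =
          2 - qform s t (fun i => (β i : ℤ)) (fun i => (β i : ℤ))) := by
  constructor
  · intro β γ z w hz hw hsz hsw hni
    have hk1 : LinearMap.ker (sigmaMap s t z w) = ⊥ := ker_sigma_bot hsz hsw hni
    have hk2 : LinearMap.ker (sigmaMap s t w z) = ⊥ :=
      ker_sigma_bot hsw hsz (fun hiso => hni (repIso_symm hiso))
    have hd := finrank_H1_eq z w hz hw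
    rw [hk1, hk2] at hd
    rw [hd]
    simp only [finrank_bot, Nat.cast_zero, add_zero, qform]
    push_cast
    have c1 : (∑ h : E ⊕ E, (γ (dTgt s t h) : ℤ) * (β (dSrc s t h) : ℤ))
        = ∑ h : E ⊕ E, (β (dSrc s t h) : ℤ) * (γ (dTgt s t h) : ℤ) :=
      Finset.sum_congr rfl fun h _ => mul_comm _ _
    have c2 : (∑ i, (γ i : ℤ) * (β i : ℤ)) = ∑ i, (β i : ℤ) * (γ i : ℤ) :=
      Finset.sum_congr rfl fun i _ => mul_comm _ _
    linarith [c1, c2]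
  · intro β z w hz hw hsz hsw horb
    obtain ⟨hk1, hk2⟩ := ker_sigma_orbit hsz horb
    have hd := finrank_H1_eq z w hz hw
    rw [hk1, hk2] at hd
    rw [hd]
    simp only [qform]
    push_cast
    have c1 : (∑ h : E ⊕ E, (β (dTgt s t h) : ℤ) * (β (dSrc s t h) : ℤ))
        = ∑ h : E ⊕ E, (β (dSrc s t h) : ℤ) * (β (dTgt s t h) : ℤ) :=
      Finset.sum_congr rfl fun h _ => mul_comm _ _
    linarith [c1]

end QV
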